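/- The weighted edit distance dist_γ is a metric on Σ* if and only if for all a,b,c ∈ Σ: (i) γ(a,‐) = γ(‐,a) > 0; (ii) γ(a,b) > 0 if a ≠ b and γ(a,a) = 0; (iii) if γ(a,b) < γ(a,‐) + γ(‐,b) then γ(a,b) = γ(b,a); (iv) γ(a,‐) ≤ γ(a,b) + γ(b,‐); and (v) min{γ(a,c), γ(a,‐)+γ(‐,c)} ≤ γ(a,b)+γ(b,c). -/

import Mathlib

open List

/-- A scoring matrix on alphabet `σ`; `none` represents the space symbol `‐`.
The value at `(none, none)` is irrelevant (never used on admissible columns). -/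
abbrev Scoring (σ : Type*) := Option σ → Option σ → ℝ

/-- `A` is an alignment of the sequences `s` and `t`: a list of columns over
`Σ₋ × Σ₋` with no column `(‐,‐)`, whose first (resp. second) components with
spaces removed spell `s` (resp. `t`). -/
def IsAlignment {σ : Type*} (A : List (Option σ × Option σ)) (s t : List σ) : Prop :=
  (∀ c ∈ A, c ≠ ((none : Option σ), (none : Option σ))) ∧
  A.filterMap Prod.fst = s ∧ A.filterMap Prod.snd = t

/-- The score of an alignment: the sum of `γ` over its columns. -/
def alignScore {σ : Type*} (γ : Scoring σ) (A : List (Option σ × Option σ)) : ℝ :=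
  (A.map fun c => γ c.1 c.2).sum

/-- The weighted edit distance: minimum alignment score. -/
noncomputable def editDist {σ : Type*} (γ : Scoring σ) (s t : List σ) : ℝ :=
  sInf {x | ∃ A, IsAlignment A s t ∧ alignScore γ A = x}

/-- The normalized edit distance: minimum normalized alignment score
(score divided by number of columns); for `s = t = ε` it is `0`. -/
noncomputable def ndist {σ : Type*} (γ : Scoring σ) (s t : List σ) : ℝ :=
  sInf {x | ∃ A, IsAlignment A s t ∧ alignScore γ A / (A.length : ℝ) = x}

/-- A walk in the digraph `D(γ)`: a list of vertices of `Σ₋` in which the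
space `‐` never follows the space. -/
def IsWalkSeq {σ : Type*} (W : List (Option σ)) : Prop :=
  W.Chain' (fun a b => ¬(a = none ∧ b = none))

/-- The weight of a walk: the sum of the weights of its consecutive arcs. -/
def walkWeight {σ : Type*} (γ : Scoring σ) (W : List (Option σ)) : ℝ :=
  ((W.zip W.tail).map fun p => γ p.1 p.2).sum

/-- `D(γ)` has a cycle of negative total weight (cycles start and end at a
vertex of `Σ`). -/
def HasNegCycle {σ : Type*} (γ : Scoring σ) : Prop :=
  ∃ (a : σ) (W : List (Option σ)),
    IsWalkSeq (some a :: (W ++ [some a])) ∧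
    walkWeight γ (some a :: (W ++ [some a])) < 0

/-- The shortest-walk distance from `x` to `y` in `D(γ)`. -/
noncomputable def walkDist {σ : Type*} (γ : Scoring σ) (x y : Option σ) : ℝ :=
  sInf {w | ∃ W : List (Option σ), IsWalkSeq W ∧ W.head? = some x ∧
    W.getLast? = some y ∧ walkWeight γ W = w}

/-- A column of an extended alignment: a nonempty sequence over `Σ₋`, with at
least one non-space symbol, no two consecutive spaces, and not having a space
at both ends. -/
def IsExtCol {σ : Type*} (c : List (Option σ)) : Prop :=
  c ≠ [] ∧ (∃ x ∈ c, x ≠ none) ∧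
  c.Chain' (fun a b => ¬(a = none ∧ b = none)) ∧
  ¬(c.head? = some none ∧ c.getLast? = some none)

/-- An extended alignment of `s, t`: a list of admissible columns whose first
symbols (spaces removed) spell `s` and whose last symbols spell `t`. -/
def IsExtAlignment {σ : Type*} (E : List (List (Option σ))) (s t : List σ) : Prop :=
  (∀ c ∈ E, IsExtCol c) ∧
  E.filterMap (fun c => c.head?.bind id) = s ∧
  E.filterMap (fun c => c.getLast?.bind id) = t

/-- The extended edit distance: minimum total score over extended alignments,
where the score of a column is the sum of `γ` over its consecutive pairs. -/
noncomputable def edist {σ : Type*} (γ : Scoring σ) (s t : List σ) : ℝ :=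
  sInf {x | ∃ E, IsExtAlignment E s t ∧ (E.map (walkWeight γ)).sum = x}

/-- `f` is a premetric: `f x x = 0` and `f x y ≥ 0`. -/
def IsPremetric {σ : Type*} (f : List σ → List σ → ℝ) : Prop :=
  (∀ s, f s s = 0) ∧ (∀ s t, 0 ≤ f s t)


/-!
Necessity: the strings of length at most one have distances `γ(a,‐)`, `γ(‐,a)` and
`min {γ(a,b), γ(a,‐) + γ(‐,b)}`, and the metric axioms on them are conditions (i)–(v).

Sufficiency: by (i) and (ii) a column `(x,y)` scores `≥ 0`, and `> 0` when `x ≠ y`; as `Σ` is finite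
the latter scores have a positive minimum, and an alignment of `s ≠ t` contains such a column.
Reading an alignment upside down, with a substitution `(a,b)` turned into `(b,‐)(‐,a)` unless
`γ(a,b) < γ(a,‐) + γ(‐,b)`, does not raise its score by (i) and (iii), whence symmetry. For the
triangle inequality, alignments of `s, t` and of `t, u` are merged along their common row `t`: two
columns `(x,b)`, `(b,z)` sharing a letter `b` become `(x,z)` or `(x,‐)(‐,z)`, at cost at most
`γ(x,b) + γ(b,z)` by (iv), (v), and the mirror image `γ(‐,c) ≤ γ(‐,b) + γ(b,c)` of (iv) that
(iii) provides.
-/section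

variable {σ : Type*}

section Alignment

variable (γ : Scoring σ)

@[simp] lemma alignScore_nil : alignScore γ [] = 0 := rfl

@[simp] lemma alignScore_cons (c : Option σ × Option σ) (A : List (Option σ × Option σ)) :
    alignScore γ (c :: A) = γ c.1 c.2 + alignScore γ A := by
  simp [alignScore]

@[simp] lemma alignScore_append (A B : List (Option σ × Option σ)) :
    alignScore γ (A ++ B) = alignScore γ A + alignScore γ B := by
  simp [alignScore]

lemma alignScore_flatMap {α : Type*} (f : α → List (Option σ × Option σ)) (l : List α) :
    alignScore γ (l.flatMap f) = (l.map fun a => alignScore γ (f a)).sum := by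
  induction l <;> simp_all

variable {γ}

lemma IsAlignment.nil : IsAlignment ([] : List (Option σ × Option σ)) [] [] := by
  simp [IsAlignment]

lemma IsAlignment.singleton {x y : Option σ} (h : (x, y) ≠ (none, none)) :
    IsAlignment [(x, y)] x.toList y.toList := by
  cases x <;> cases y <;> simp_all [IsAlignment]

lemma IsAlignment.append {A B : List (Option σ × Option σ)} {s t s' t' : List σ}
    (hA : IsAlignment A s t) (hB : IsAlignment B s' t') :
    IsAlignment (A ++ B) (s ++ s') (t ++ t') := by
  obtain ⟨hA, rfl, rfl⟩ := hA
  obtain ⟨hB, rfl, rfl⟩ := hB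
  refine ⟨fun c hc => ?_, by simp, by simp⟩
  rcases List.mem_append.1 hc with hc | hc
  exacts [hA c hc, hB c hc]

lemma IsAlignment.flatMap {α : Type*} {f : α → List (Option σ × Option σ)} {g h : α → List σ}
    {l : List α} (hf : ∀ a ∈ l, IsAlignment (f a) (g a) (h a)) :
    IsAlignment (l.flatMap f) (l.flatMap g) (l.flatMap h) := by
  induction l with
  | nil => exact .nil
  | cons a l ih =>
    simp only [List.flatMap_cons]
    exact (hf a List.mem_cons_self).append (ih fun b hb => hf b (List.mem_cons_of_mem a hb))

lemma IsAlignment.length_le {A : List (Option σ × Option σ)} {s t : List σ}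
    (h : IsAlignment A s t) : A.length ≤ s.length + t.length := by
  obtain ⟨hA, rfl, rfl⟩ := h
  induction A with
  | nil => simp
  | cons c A ih =>
    have hc := hA c List.mem_cons_self
    have := ih fun d hd => hA d (List.mem_cons_of_mem c hd)
    obtain ⟨_ | _, _ | _⟩ := c <;> simp_all <;> omega

lemma isAlignment_del_ins (a b : σ) : IsAlignment [(some a, none), (none, some b)] [a] [b] :=
  (IsAlignment.singleton (x := some a) (y := none) (by simp)).append (.singleton (by simp))

lemma exists_isAlignment (s t : List σ) : ∃ A : List (Option σ × Option σ), IsAlignment A s t := by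
  have hs := IsAlignment.flatMap (l := s) fun a _ => .singleton (x := some a) (y := none) (by simp)
  have ht := IsAlignment.flatMap (l := t) fun b _ => .singleton (x := none) (y := some b) (by simp)
  exact ⟨_, by convert hs.append ht <;> simp [List.flatMap_eq_nil_iff]⟩

lemma isAlignment_diag (s : List σ) :
    IsAlignment (s.flatMap fun a => [(some a, some a)]) s s := by
  simpa using
    IsAlignment.flatMap (l := s) fun a _ => .singleton (x := some a) (y := some a) (by simp)

end Alignment

section Singletons

variable {A : List (Option σ × Option σ)} {a b : σ}

lemma isAlignment_singleton_nil_iff : IsAlignment A [a] [] ↔ A = [(some a, none)] := by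
  refine ⟨fun h => ?_, fun h => h ▸ .singleton (by simp)⟩
  have hlen := h.length_le
  obtain ⟨hA, hs, ht⟩ := h
  match A, hlen with
  | [], _ => simp at hs
  | [(x, y)], _ => cases x <;> cases y <;> simp_all

lemma isAlignment_nil_singleton_iff : IsAlignment A [] [a] ↔ A = [(none, some a)] := by
  refine ⟨fun h => ?_, fun h => h ▸ .singleton (by simp)⟩
  have hlen := h.length_le
  obtain ⟨hA, hs, ht⟩ := h
  match A, hlen with
  | [], _ => simp at ht
  | [(x, y)], _ => cases x <;> cases y <;> simp_all

lemma isAlignment_singleton_singleton_iff :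
    IsAlignment A [a] [b] ↔ A = [(some a, some b)] ∨ A = [(some a, none), (none, some b)] ∨
      A = [(none, some b), (some a, none)] := by
  refine ⟨fun h => ?_, ?_⟩
  · have hlen := h.length_le
    obtain ⟨hA, hs, ht⟩ := h
    match A, hlen with
    | [], _ => simp at hs
    | [(x, y)], _ => cases x <;> cases y <;> simp_all
    | [(x, y), (z, w)], _ => cases x <;> cases y <;> cases z <;> cases w <;> simp_all
  · rintro (rfl | rfl | rfl)
    · exact .singleton (by simp)
    · exact isAlignment_del_ins a b
    · exact (IsAlignment.singleton (x := none) (y := some b) (by simp)).append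
        (.singleton (by simp))

variable (γ : Scoring σ)

lemma editDist_singleton_nil : editDist γ [a] [] = γ (some a) none := by
  simp [editDist, isAlignment_singleton_nil_iff]

lemma editDist_nil_singleton : editDist γ [] [a] = γ none (some a) := by
  simp [editDist, isAlignment_nil_singleton_iff]

lemma editDist_singleton_singleton :
    editDist γ [a] [b] = min (γ (some a) (some b)) (γ (some a) none + γ none (some b)) := by
  have hset : {x | ∃ A, IsAlignment A [a] [b] ∧ alignScore γ A = x} =
      {γ (some a) (some b), γ (some a) none + γ none (some b)} := by
    ext x
    simp [isAlignment_singleton_singleton_iff, eq_comm, add_comm]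
  rw [editDist, hset, csInf_pair]

end Singletons

section Bounds

variable {γ : Scoring σ} {s t : List σ}

lemma le_alignScore_of_mem (hγ : ∀ x y : Option σ, (x, y) ≠ (none, none) → 0 ≤ γ x y)
    {A : List (Option σ × Option σ)} (hA : ∀ c ∈ A, c ≠ (none, none)) {c : Option σ × Option σ}
    (hc : c ∈ A) : γ c.1 c.2 ≤ alignScore γ A := by
  refine List.single_le_sum (fun _ hx => ?_) _ (List.mem_map_of_mem hc)
  obtain ⟨d, hd, rfl⟩ := List.mem_map.1 hx
  exact hγ d.1 d.2 (hA d hd)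

lemma alignScore_nonneg (hγ : ∀ x y : Option σ, (x, y) ≠ (none, none) → 0 ≤ γ x y)
    {A : List (Option σ × Option σ)} (hA : ∀ c ∈ A, c ≠ (none, none)) : 0 ≤ alignScore γ A := by
  refine List.sum_nonneg fun _ hx => ?_
  obtain ⟨c, hc, rfl⟩ := List.mem_map.1 hx
  exact hγ c.1 c.2 (hA c hc)

lemma editDist_le_alignScore (hγ : ∀ x y : Option σ, (x, y) ≠ (none, none) → 0 ≤ γ x y)
    {A : List (Option σ × Option σ)} (hA : IsAlignment A s t) :
    editDist γ s t ≤ alignScore γ A :=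
  csInf_le ⟨0, fun _ ⟨_, hB, hx⟩ => hx ▸ alignScore_nonneg hγ hB.1⟩ ⟨A, hA, rfl⟩

lemma le_editDist {x : ℝ} (h : ∀ A, IsAlignment A s t → x ≤ alignScore γ A) :
    x ≤ editDist γ s t := by
  obtain ⟨A, hA⟩ := exists_isAlignment s t
  exact le_csInf ⟨_, A, hA, rfl⟩ fun _ ⟨B, hB, hx⟩ => hx ▸ h B hB

end Bounds

section Swap

variable (γ : Scoring σ)

/-- A substitution is transposed only when it beats the deletion–insertion pair, the case in which
condition (iii) makes its score symmetric. -/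
noncomputable def swapCol : Option σ × Option σ → List (Option σ × Option σ)
  | (some a, some b) =>
      if γ (some a) (some b) < γ (some a) none + γ none (some b) then [(some b, some a)]
      else [(some b, none), (none, some a)]
  | (x, y) => [(y, x)]

lemma isAlignment_swapCol {c : Option σ × Option σ} (hc : c ≠ (none, none)) :
    IsAlignment (swapCol γ c) c.2.toList c.1.toList := by
  obtain ⟨_ | a, _ | b⟩ := c
  · exact absurd rfl hc
  all_goals simp only [swapCol]
  · exact .singleton (by simp)
  · exact .singleton (by simp)
  · split
    · exact .singleton (by simp)
    · exact isAlignment_del_ins b a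

lemma IsAlignment.swap {A : List (Option σ × Option σ)} {s t : List σ} (h : IsAlignment A s t) :
    IsAlignment (A.flatMap (swapCol γ)) t s := by
  obtain ⟨hA, rfl, rfl⟩ := h
  simpa only [List.filterMap_eq_flatMap_toList] using
    IsAlignment.flatMap fun c hc => isAlignment_swapCol γ (hA c hc)

variable {γ}

lemma alignScore_swapCol_le (hgap : ∀ a : σ, γ (some a) none = γ none (some a))
    (hsub_symm : ∀ a b : σ, γ (some a) (some b) < γ (some a) none + γ none (some b) →
      γ (some a) (some b) = γ (some b) (some a))
    (c : Option σ × Option σ) : alignScore γ (swapCol γ c) ≤ γ c.1 c.2 := by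
  obtain ⟨_ | a, _ | b⟩ := c
  · simp [swapCol]
  · simp [swapCol, hgap]
  · simp [swapCol, hgap]
  · simp only [swapCol]
    split_ifs with h
    · simp [hsub_symm a b h]
    · simp only [alignScore_cons, alignScore_nil, hgap] at h ⊢
      linarith

lemma editDist_comm_le (hγ : ∀ x y : Option σ, (x, y) ≠ (none, none) → 0 ≤ γ x y)
    (hgap : ∀ a : σ, γ (some a) none = γ none (some a))
    (hsub_symm : ∀ a b : σ, γ (some a) (some b) < γ (some a) none + γ none (some b) →
      γ (some a) (some b) = γ (some b) (some a))
    (s t : List σ) : editDist γ t s ≤ editDist γ s t := by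
  refine le_editDist fun A hA => (editDist_le_alignScore hγ (hA.swap γ)).trans ?_
  rw [alignScore_flatMap, alignScore]
  exact List.sum_le_sum fun c _ => alignScore_swapCol_le hgap hsub_symm c

end Swap

section Compose

variable (γ : Scoring σ)

noncomputable def mergeCol : Option σ → Option σ → List (Option σ × Option σ)
  | some a, some c =>
      if γ (some a) (some c) ≤ γ (some a) none + γ none (some c) then [(some a, some c)]
      else [(some a, none), (none, some c)]
  | none, none => []
  | x, z => [(x, z)]

noncomputable def alignComp :
    List (Option σ × Option σ) → List (Option σ × Option σ) → List (Option σ × Option σ)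
  | [], B => B
  | A, [] => A
  | (x, none) :: A, B => (x, none) :: alignComp A B
  | (x, some b) :: A, (none, z) :: B => (none, z) :: alignComp ((x, some b) :: A) B
  | (x, some _) :: A, (some _, z) :: B => mergeCol γ x z ++ alignComp A B
termination_by A B => A.length + B.length

lemma isAlignment_mergeCol (x z : Option σ) : IsAlignment (mergeCol γ x z) x.toList z.toList := by
  rcases x with _ | a <;> rcases z with _ | c
  · exact .nil
  all_goals simp only [mergeCol]
  · exact .singleton (by simp)
  · exact .singleton (by simp)
  · split
    · exact .singleton (by simp)
    · exact isAlignment_del_ins a c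

variable {A B : List (Option σ × Option σ)}

lemma filterMap_fst_alignComp (h : A.filterMap Prod.snd = B.filterMap Prod.fst) :
    (alignComp γ A B).filterMap Prod.fst = A.filterMap Prod.fst := by
  induction A, B using alignComp.induct with
  | case1 B => simpa [alignComp] using h.symm
  | case2 A _ => simp [alignComp]
  | case3 x A B hB ih => cases x <;> simp_all [alignComp]
  | case4 x b A z B ih => simp_all [alignComp]
  | case5 x b A b' z B ih =>
    simp only [List.filterMap_cons, List.cons.injEq] at h
    rw [alignComp, List.filterMap_append, (isAlignment_mergeCol γ x z).2.1, ih h.2]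
    cases x <;> rfl

lemma filterMap_snd_alignComp (h : A.filterMap Prod.snd = B.filterMap Prod.fst) :
    (alignComp γ A B).filterMap Prod.snd = B.filterMap Prod.snd := by
  induction A, B using alignComp.induct with
  | case1 B => simp [alignComp]
  | case2 A _ => simpa [alignComp] using h
  | case3 x A B _ ih => simp_all [alignComp]
  | case4 x b A z B ih => cases z <;> simp_all [alignComp]
  | case5 x b A b' z B ih =>
    simp only [List.filterMap_cons, List.cons.injEq] at h
    rw [alignComp, List.filterMap_append, (isAlignment_mergeCol γ x z).2.2, ih h.2]
    cases z <;> rfl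

lemma mem_alignComp_ne (hA : ∀ c ∈ A, c ≠ (none, none)) (hB : ∀ c ∈ B, c ≠ (none, none)) :
    ∀ c ∈ alignComp γ A B, c ≠ (none, none) := by
  induction A, B using alignComp.induct with
  | case1 B => simpa [alignComp] using hB
  | case2 A _ => simpa [alignComp] using hA
  | case3 x A B _ ih =>
    simp only [alignComp, List.mem_cons, forall_eq_or_imp] at hA ⊢
    exact ⟨hA.1, ih hA.2 hB⟩
  | case4 x b A z B ih =>
    simp only [alignComp, List.mem_cons, forall_eq_or_imp] at hB ⊢
    exact ⟨hB.1, ih hA hB.2⟩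
  | case5 x b A b' z B ih =>
    rw [alignComp]
    intro c hc
    rcases List.mem_append.1 hc with hc | hc
    · exact (isAlignment_mergeCol γ x z).1 c hc
    · exact ih (fun c hc => hA c (List.mem_cons_of_mem _ hc))
        (fun c hc => hB c (List.mem_cons_of_mem _ hc)) c hc

lemma IsAlignment.comp {s t u : List σ} (hA : IsAlignment A s t) (hB : IsAlignment B t u) :
    IsAlignment (alignComp γ A B) s u := by
  have h : A.filterMap Prod.snd = B.filterMap Prod.fst := hA.2.2.trans hB.2.1.symm
  exact ⟨mem_alignComp_ne γ hA.1 hB.1, (filterMap_fst_alignComp γ h).trans hA.2.1,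
    (filterMap_snd_alignComp γ h).trans hB.2.2⟩

end Compose

section ComposeScore

variable {γ : Scoring σ}

lemma ins_le_ins_add_sub (hgap : ∀ a : σ, γ (some a) none = γ none (some a))
    (hgap_pos : ∀ a : σ, 0 < γ (some a) none)
    (hsub_symm : ∀ a b : σ, γ (some a) (some b) < γ (some a) none + γ none (some b) →
      γ (some a) (some b) = γ (some b) (some a))
    (hdel : ∀ a b : σ, γ (some a) none ≤ γ (some a) (some b) + γ (some b) none) (b c : σ) :
    γ none (some c) ≤ γ none (some b) + γ (some b) (some c) := by
  by_cases h : γ (some b) (some c) < γ (some b) none + γ none (some c)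
  · rw [hsub_symm b c h, ← hgap b, ← hgap c]
    linarith [hdel c b]
  · linarith [hgap_pos b, hgap b]

lemma alignScore_mergeCol_le (hgap : ∀ a : σ, γ (some a) none = γ none (some a))
    (hgap_pos : ∀ a : σ, 0 < γ (some a) none)
    (hsub_symm : ∀ a b : σ, γ (some a) (some b) < γ (some a) none + γ none (some b) →
      γ (some a) (some b) = γ (some b) (some a))
    (hdel : ∀ a b : σ, γ (some a) none ≤ γ (some a) (some b) + γ (some b) none)
    (htri : ∀ a b c : σ, min (γ (some a) (some c)) (γ (some a) none + γ none (some c)) ≤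
      γ (some a) (some b) + γ (some b) (some c))
    (b : σ) (x z : Option σ) :
    alignScore γ (mergeCol γ x z) ≤ γ x (some b) + γ (some b) z := by
  rcases x with _ | a <;> rcases z with _ | c
  · simp only [mergeCol, alignScore_nil]
    linarith [hgap_pos b, hgap b]
  · simpa [mergeCol, add_comm] using ins_le_ins_add_sub hgap hgap_pos hsub_symm hdel b c
  · simpa [mergeCol] using hdel a b
  · have := htri a b c
    simp only [mergeCol]
    split_ifs with h
    · simpa [min_eq_left h] using this
    · simpa [min_eq_right (not_le.1 h).le] using this

lemma alignScore_alignComp_le (hgap : ∀ a : σ, γ (some a) none = γ none (some a))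
    (hgap_pos : ∀ a : σ, 0 < γ (some a) none)
    (hsub_symm : ∀ a b : σ, γ (some a) (some b) < γ (some a) none + γ none (some b) →
      γ (some a) (some b) = γ (some b) (some a))
    (hdel : ∀ a b : σ, γ (some a) none ≤ γ (some a) (some b) + γ (some b) none)
    (htri : ∀ a b c : σ, min (γ (some a) (some c)) (γ (some a) none + γ none (some c)) ≤
      γ (some a) (some b) + γ (some b) (some c))
    {A B : List (Option σ × Option σ)} (h : A.filterMap Prod.snd = B.filterMap Prod.fst) :
    alignScore γ (alignComp γ A B) ≤ alignScore γ A + alignScore γ B := by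
  induction A, B using alignComp.induct with
  | case1 B => simp [alignComp]
  | case2 A _ => simp [alignComp]
  | case3 x A B _ ih =>
    simp only [alignComp, alignScore_cons]
    linarith [ih (by simpa using h)]
  | case4 x b A z B ih =>
    have := ih (by simpa using h)
    simp only [alignComp, alignScore_cons] at this ⊢
    linarith
  | case5 x b A b' z B ih =>
    simp only [List.filterMap_cons, List.cons.injEq] at h
    obtain ⟨rfl, h⟩ := h
    simp only [alignComp, alignScore_append, alignScore_cons]
    linarith [ih h, alignScore_mergeCol_le hgap hgap_pos hsub_symm hdel htri b x z]

end ComposeScore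

section Metric

variable {γ : Scoring σ}

lemma scoring_pos_of_ne (hgap : ∀ a : σ, γ (some a) none = γ none (some a))
    (hgap_pos : ∀ a : σ, 0 < γ (some a) none)
    (hsub_pos : ∀ a b : σ, a ≠ b → 0 < γ (some a) (some b))
    {x y : Option σ} (h : x ≠ y) : 0 < γ x y := by
  rcases x with _ | a <;> rcases y with _ | b
  · exact absurd rfl h
  · exact hgap b ▸ hgap_pos b
  · exact hgap_pos a
  · exact hsub_pos a b (by simpa using h)

lemma scoring_nonneg (hpos : ∀ x y : Option σ, x ≠ y → 0 < γ x y)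
    (hsub_self : ∀ a : σ, γ (some a) (some a) = 0) (x y : Option σ) (h : (x, y) ≠ (none, none)) :
    0 ≤ γ x y := by
  by_cases hxy : x = y
  · subst hxy
    obtain _ | a := x
    · exact absurd rfl h
    · exact (hsub_self a).ge
  · exact (hpos x y hxy).le

lemma editDist_self (hγ : ∀ x y : Option σ, (x, y) ≠ (none, none) → 0 ≤ γ x y)
    (hsub_self : ∀ a : σ, γ (some a) (some a) = 0) (s : List σ) : editDist γ s s = 0 := by
  refine le_antisymm ?_ (le_editDist fun A hA => alignScore_nonneg hγ hA.1)
  refine (editDist_le_alignScore hγ (isAlignment_diag s)).trans_eq ?_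
  simp [alignScore_flatMap, hsub_self]

lemma exists_mem_fst_ne_snd {A : List (Option σ × Option σ)} {s t : List σ}
    (hA : IsAlignment A s t) (hst : s ≠ t) : ∃ c ∈ A, c.1 ≠ c.2 := by
  by_contra! h
  exact hst (hA.2.1.symm.trans ((List.filterMap_congr h).trans hA.2.2))

lemma editDist_pos [Finite σ] (hpos : ∀ x y : Option σ, x ≠ y → 0 < γ x y)
    (hγ : ∀ x y : Option σ, (x, y) ≠ (none, none) → 0 ≤ γ x y) {s t : List σ} (hst : s ≠ t) :
    0 < editDist γ s t := by
  obtain ⟨a⟩ : Nonempty σ := by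
    rcases s with _ | ⟨a, _⟩
    · rcases t with _ | ⟨b, _⟩
      exacts [absurd rfl hst, ⟨b⟩]
    · exact ⟨a⟩
  have : Nonempty {c : Option σ × Option σ // c.1 ≠ c.2} := ⟨⟨(some a, none), by simp⟩⟩
  obtain ⟨c₀, hc₀⟩ := Finite.exists_min fun c : {c : Option σ × Option σ // c.1 ≠ c.2} =>
    γ c.1.1 c.1.2
  refine (hpos _ _ c₀.2).trans_le (le_editDist fun A hA => ?_)
  obtain ⟨c, hcA, hc⟩ := exists_mem_fst_ne_snd hA hst
  exact (hc₀ ⟨c, hc⟩).trans (le_alignScore_of_mem hγ hA.1 hcA)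

lemma editDist_comm (hγ : ∀ x y : Option σ, (x, y) ≠ (none, none) → 0 ≤ γ x y)
    (hgap : ∀ a : σ, γ (some a) none = γ none (some a))
    (hsub_symm : ∀ a b : σ, γ (some a) (some b) < γ (some a) none + γ none (some b) →
      γ (some a) (some b) = γ (some b) (some a))
    (s t : List σ) : editDist γ s t = editDist γ t s :=
  le_antisymm (editDist_comm_le hγ hgap hsub_symm t s) (editDist_comm_le hγ hgap hsub_symm s t)

lemma editDist_triangle (hγ : ∀ x y : Option σ, (x, y) ≠ (none, none) → 0 ≤ γ x y)
    (hgap : ∀ a : σ, γ (some a) none = γ none (some a))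
    (hgap_pos : ∀ a : σ, 0 < γ (some a) none)
    (hsub_symm : ∀ a b : σ, γ (some a) (some b) < γ (some a) none + γ none (some b) →
      γ (some a) (some b) = γ (some b) (some a))
    (hdel : ∀ a b : σ, γ (some a) none ≤ γ (some a) (some b) + γ (some b) none)
    (htri : ∀ a b c : σ, min (γ (some a) (some c)) (γ (some a) none + γ none (some c)) ≤
      γ (some a) (some b) + γ (some b) (some c))
    (s t u : List σ) : editDist γ s u ≤ editDist γ s t + editDist γ t u := by
  have hcomp : ∀ A B, IsAlignment A s t → IsAlignment B t u →
      editDist γ s u ≤ alignScore γ A + alignScore γ B := fun A B hA hB =>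
    (editDist_le_alignScore hγ (hA.comp γ hB)).trans
      (alignScore_alignComp_le hgap hgap_pos hsub_symm hdel htri (hA.2.2.trans hB.2.1.symm))
  have hleft : ∀ A, IsAlignment A s t → editDist γ s u - alignScore γ A ≤ editDist γ t u :=
    fun A hA => le_editDist fun B hB => by linarith [hcomp A B hA hB]
  have : editDist γ s u - editDist γ t u ≤ editDist γ s t :=
    le_editDist fun A hA => by linarith [hleft A hA]
  linarith

end Metric

lemma scoring_conditions_of_editDist {γ : Scoring σ} (hself : ∀ s : List σ, editDist γ s s = 0)
    (hpos : ∀ s t : List σ, s ≠ t → 0 < editDist γ s t)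
    (hcomm : ∀ s t : List σ, editDist γ s t = editDist γ t s)
    (htri : ∀ s t u : List σ, editDist γ s u ≤ editDist γ s t + editDist γ t u) (a b c : σ) :
    (γ (some a) none = γ none (some a) ∧ 0 < γ (some a) none) ∧
    (a ≠ b → 0 < γ (some a) (some b)) ∧ γ (some a) (some a) = 0 ∧
    (γ (some a) (some b) < γ (some a) none + γ none (some b) →
      γ (some a) (some b) = γ (some b) (some a)) ∧
    γ (some a) none ≤ γ (some a) (some b) + γ (some b) none ∧
    min (γ (some a) (some c)) (γ (some a) none + γ none (some c)) ≤
      γ (some a) (some b) + γ (some b) (some c) := by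
  have hgap (x : σ) : γ (some x) none = γ none (some x) := by
    simpa [editDist_singleton_nil, editDist_nil_singleton] using hcomm [x] []
  have hgap_pos (x : σ) : 0 < γ (some x) none := by
    simpa [editDist_singleton_nil] using hpos [x] [] (by simp)
  have hsub_le (x y : σ) : editDist γ [x] [y] ≤ γ (some x) (some y) := by
    rw [editDist_singleton_singleton]
    exact min_le_left _ _
  refine ⟨⟨hgap a, hgap_pos a⟩, fun hab => (hpos [a] [b] (by simpa)).trans_le (hsub_le a b),
    ?_, fun hlt => ?_, ?_, ?_⟩
  · have h := hself [a]
    rw [editDist_singleton_singleton] at h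
    rcases min_eq_iff.1 h with ⟨h, _⟩ | ⟨h, _⟩
    exacts [h, by linarith [hgap_pos a, hgap a]]
  · have h := hcomm [a] [b]
    rw [editDist_singleton_singleton, editDist_singleton_singleton, min_eq_left hlt.le] at h
    rcases min_eq_iff.1 h.symm with ⟨h, _⟩ | ⟨h, _⟩
    exacts [h.symm, by linarith [hgap a, hgap b]]
  · have h := htri [a] [b] []
    rw [editDist_singleton_nil, editDist_singleton_nil] at h
    linarith [hsub_le a b]
  · have h := htri [a] [b] [c]
    rw [editDist_singleton_singleton] at h
    linarith [hsub_le a b, hsub_le b c]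

end

theorem stmt7 {σ : Type*} [Fintype σ] (γ : Scoring σ) :
    ((∀ s : List σ, editDist γ s s = 0) ∧
     (∀ s t : List σ, s ≠ t → 0 < editDist γ s t) ∧
     (∀ s t : List σ, editDist γ s t = editDist γ t s) ∧
     (∀ s t u : List σ, editDist γ s u ≤ editDist γ s t + editDist γ t u)) ↔
      (∀ a b c : σ,
        (γ (some a) none = γ none (some a) ∧ 0 < γ (some a) none) ∧
        (a ≠ b → 0 < γ (some a) (some b)) ∧ γ (some a) (some a) = 0 ∧
        (γ (some a) (some b) < γ (some a) none + γ none (some b) →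
          γ (some a) (some b) = γ (some b) (some a)) ∧
        γ (some a) none ≤ γ (some a) (some b) + γ (some b) none ∧
        min (γ (some a) (some c)) (γ (some a) none + γ none (some c)) ≤
          γ (some a) (some b) + γ (some b) (some c)) := by
  refine ⟨fun ⟨hself, hpos, hcomm, htri⟩ => scoring_conditions_of_editDist hself hpos hcomm htri,
    fun h => ?_⟩
  have hgap a := (h a a a).1.1
  have hgap_pos a := (h a a a).1.2
  have hsub_self a := (h a a a).2.2.1
  have hsub_symm a b := (h a b b).2.2.2.1
  have hpos : ∀ x y : Option σ, x ≠ y → 0 < γ x y := fun x y =>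
    scoring_pos_of_ne hgap hgap_pos fun a b => (h a b b).2.1
  have hγ := scoring_nonneg hpos hsub_self
  exact ⟨editDist_self hγ hsub_self, fun s t => editDist_pos hpos hγ,
    editDist_comm hγ hgap hsub_symm,
    editDist_triangle hγ hgap hgap_pos hsub_symm (fun a b => (h a b b).2.2.2.2.1)
      fun a b c => (h a b c).2.2.2.2.2⟩
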